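/- If u is a factor of the Thue–Morse word t of length |u| > 3 · 2^{k-1} (k ≥ 1), then the cutting set of order k of u is unique: there is exactly one way, up to the position modulo 2^k determined by any occurrence, to align u with the decomposition of t into blocks φ^k(t_0) φ^k(t_1) φ^k(t_2)···. Formally, the set { ([i, i+|u|] ∩ 2^k ℕ) − i : i ∈ ℕ, u = t_{[i, i+|u|)} } is a singleton. -/

import Mathlib

/-- Number of occurrences of the second word as a (scattered) subword of the first. -/
def binom {α : Type*} [DecidableEq α] : List α → List α → ℕ
  | _, [] => 1
  | [], _ :: _ => 0
  | a :: u, b :: v => binom u (b :: v) + if a = b then binom u v else 0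

/-- k-binomial equivalence. -/
def BinEq (k : ℕ) (u v : List Bool) : Prop :=
  ∀ x : List Bool, x.length ≤ k → binom u x = binom v x

/-- The Thue–Morse word: `tm n` is the parity of the number of ones
in the binary expansion of `n` (`false` plays the role of the letter 0). -/
def tm (n : ℕ) : Bool := (Nat.digits 2 n).count 1 % 2 == 1

/-- `u` occurs as a (contiguous) factor of the Thue–Morse word. -/
def isFactorTM (u : List Bool) : Prop :=
  ∃ i : ℕ, u = (List.range u.length).map (fun j => tm (i + j))

/-- The Thue–Morse morphism φ(0)=01, φ(1)=10, extended to words. -/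
def phiW (w : List Bool) : List Bool :=
  w.flatMap (fun a => if a then [true, false] else [false, true])

/-- The set of cutting sets of order `k` of a factor `u` of the Thue–Morse word:
for every occurrence `t_[i, i+|u|)` of `u`, the relative positions in `[i, i+|u|]`
of the nonnegative multiples of `2^k`. -/
def CutTM (k : ℕ) (u : List Bool) : Set (Set ℕ) :=
  { S | ∃ i : ℕ, u = (List.range u.length).map (fun j => tm (i + j)) ∧
      S = Set.image (fun m => m - i) {m | i ≤ m ∧ m ≤ i + u.length ∧ 2 ^ k ∣ m} }


/-!
Since `t = φ(t)`, `t_{2n} t_{2n+1} = φ(t_n)`, and `t` contains no cube `aaa`. A window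
`a ā b b̄` starting at an even position cannot also occur at an odd position `2m+1`, as it would
force `t_m = t_{m+1} = t_{m+2}`; so a window of length `≥ 4` determines the parity of its start.
Two occurrences of length `L` at positions `i, i'` of equal parity give agreement of `t` on a
length `⌈L/2⌉` window at `i/2, i'/2`, and induction yields `i ≡ i' (mod 2^k)` once
`L > 3 · 2^(k-1)`. The cutting set of the occurrence at `i` is `{s ≤ |u| | 2^k ∣ i + s}`, which
depends only on `i mod 2^k`.
-/

lemma tm_two_mul (n : ℕ) : tm (2 * n) = tm n := by
  rcases Nat.eq_zero_or_pos n with rfl | hn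
  · rfl
  · unfold tm
    rw [Nat.digits_def' (by norm_num) (by omega)]
    simp [Nat.mul_div_cancel_left _ (by norm_num : 0 < 2)]

lemma tm_two_mul_add_one (n : ℕ) : tm (2 * n + 1) = !tm n := by
  unfold tm
  rw [Nat.digits_def' (by norm_num) (by omega),
    show (2 * n + 1) % 2 = 1 by omega, show (2 * n + 1) / 2 = n by omega]
  rcases Nat.mod_two_eq_zero_or_one ((Nat.digits 2 n).count 1) with h | h <;>
    simp [Nat.add_mod, h]

lemma tm_not_cube (m : ℕ) : ¬(tm m = tm (m + 1) ∧ tm (m + 1) = tm (m + 2)) := by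
  rintro ⟨h₀, h₁⟩
  obtain ⟨p, rfl | rfl⟩ := Nat.even_or_odd' m
  · rw [tm_two_mul_add_one, tm_two_mul] at h₀
    cases tm p <;> simp at h₀
  · rw [show 2 * p + 1 + 1 = 2 * (p + 1) by ring, show 2 * p + 1 + 2 = 2 * (p + 1) + 1 by ring,
      tm_two_mul_add_one, tm_two_mul] at h₁
    cases tm (p + 1) <;> simp at h₁

lemma tm_window_even_ne_odd (n m : ℕ) :
    ¬∀ j < 4, tm (2 * n + j) = tm (2 * m + 1 + j) := by
  intro h
  have e₀ := h 0 (by omega)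
  have e₁ := h 1 (by omega)
  have e₂ := h 2 (by omega)
  have e₃ := h 3 (by omega)
  rw [Nat.add_zero, Nat.add_zero, tm_two_mul, tm_two_mul_add_one] at e₀
  rw [show 2 * m + 1 + 1 = 2 * (m + 1) by ring, tm_two_mul_add_one, tm_two_mul] at e₁
  rw [show 2 * n + 2 = 2 * (n + 1) by ring, show 2 * m + 1 + 2 = 2 * (m + 1) + 1 by ring,
    tm_two_mul, tm_two_mul_add_one] at e₂
  rw [show 2 * n + 3 = 2 * (n + 1) + 1 by ring, show 2 * m + 1 + 3 = 2 * (m + 2) by ring,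
    tm_two_mul_add_one, tm_two_mul] at e₃
  refine tm_not_cube m ⟨?_, ?_⟩
  · rw [← e₁, e₀, Bool.not_not]
  · rw [← e₃, e₂, Bool.not_not]

lemma mod_two_eq_of_tm_agree {i i' L : ℕ} (hL : 4 ≤ L)
    (h : ∀ j < L, tm (i + j) = tm (i' + j)) : i % 2 = i' % 2 := by
  obtain ⟨n, rfl | rfl⟩ := Nat.even_or_odd' i <;> obtain ⟨m, rfl | rfl⟩ := Nat.even_or_odd' i'
  · omega
  · exact (tm_window_even_ne_odd n m fun j hj => h j (by omega)).elim
  · exact (tm_window_even_ne_odd m n fun j hj => (h j (by omega)).symm).elim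
  · omega

lemma tm_agree_div_two {i i' L : ℕ} (hpar : i % 2 = i' % 2)
    (h : ∀ j < L, tm (i + j) = tm (i' + j)) (j : ℕ) (hj : j < (L + 1) / 2) :
    tm (i / 2 + j) = tm (i' / 2 + j) := by
  have hij := h (2 * j) (by omega)
  rw [show i + 2 * j = 2 * (i / 2 + j) + i % 2 by omega,
    show i' + 2 * j = 2 * (i' / 2 + j) + i % 2 by omega] at hij
  rcases Nat.mod_two_eq_zero_or_one i with hr | hr <;> rw [hr] at hij
  · simpa only [Nat.add_zero, tm_two_mul] using hij
  · simpa only [tm_two_mul_add_one, Bool.not_inj_iff] using hij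

theorem tm_modEq_of_agree (k : ℕ) {i i' L : ℕ} (hL : 3 * 2 ^ k < L)
    (h : ∀ j < L, tm (i + j) = tm (i' + j)) : i ≡ i' [MOD 2 ^ (k + 1)] := by
  induction k generalizing i i' L with
  | zero => exact mod_two_eq_of_tm_agree (by omega) h
  | succ k ih =>
    have hpow : 1 ≤ 2 ^ k := Nat.one_le_two_pow
    rw [pow_succ'] at hL
    have hpar := mod_two_eq_of_tm_agree (by omega) h
    have hhalf : i / 2 ≡ i' / 2 [MOD 2 ^ (k + 1)] :=
      ih (L := (L + 1) / 2) (by omega) (tm_agree_div_two hpar h)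
    unfold Nat.ModEq at hhalf ⊢
    rw [pow_succ' 2 (k + 1), Nat.mod_mul, Nat.mod_mul, hpar, hhalf]

lemma tm_agree_of_map_range_eq {i i' L : ℕ}
    (h : (List.range L).map (fun j => tm (i + j)) = (List.range L).map (fun j => tm (i' + j))) :
    ∀ j < L, tm (i + j) = tm (i' + j) :=
  fun j hj => List.map_inj_left.1 h j (List.mem_range.2 hj)

lemma image_sub_multiples_eq (p L i : ℕ) :
    (fun m => m - i) '' {m | i ≤ m ∧ m ≤ i + L ∧ p ∣ m} = {s | s ≤ L ∧ p ∣ i + s} := by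
  ext s
  constructor
  · rintro ⟨m, ⟨him, hmL, hpm⟩, rfl⟩
    exact ⟨Nat.sub_le_iff_le_add'.2 hmL, by rwa [Nat.add_sub_cancel' him]⟩
  · rintro ⟨hsL, hps⟩
    exact ⟨i + s, ⟨by omega, by omega, hps⟩, by simp⟩

theorem cut_singleton (k : ℕ) (hk : 1 ≤ k) (u : List Bool) (hu : isFactorTM u)
    (hlen : 3 * 2 ^ (k - 1) < u.length) :
    ∃ C : Set ℕ, CutTM k u = {C} := by
  obtain ⟨i₀, hi₀⟩ := hu
  obtain ⟨k, rfl⟩ : ∃ k', k = k' + 1 := ⟨k - 1, by omega⟩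
  refine ⟨{s | s ≤ u.length ∧ 2 ^ (k + 1) ∣ i₀ + s},
    Set.eq_singleton_iff_unique_mem.2 ⟨⟨i₀, hi₀, (image_sub_multiples_eq _ _ _).symm⟩, ?_⟩⟩
  rintro S ⟨i, hi, rfl⟩
  have hmod : i ≡ i₀ [MOD 2 ^ (k + 1)] :=
    tm_modEq_of_agree k (by simpa using hlen) (tm_agree_of_map_range_eq (hi.symm.trans hi₀))
  rw [image_sub_multiples_eq]
  exact Set.ext fun s => and_congr_right' ((hmod.add_right s).dvd_iff dvd_rfl)
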